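/- arXiv:2512.16082 — 8 statements merged into one kernel-verified Lean document; each statement's English description precedes it below -/
import Mathlib

section
/- Let Σ and Δ be finite alphabets, C ⊆ Σ^n a nonempty code, and f : Σ → Δ^k an injective map with image D. Then the relative distance of the concatenated code C∘D = {f(w_1)⋯f(w_n) : w ∈ C} ⊆ Δ^{kn} is at least δ(C)·δ(D), where δ denotes minimum normalized Hamming distance between distinct codewords. -/
/-- Concatenation of codes: the relative distance of the concatenated code
`C ∘ D` is at least `δ(C) · δ(D)`. Here `C ⊆ Sig^n`, `f : Sig → Del^k` is
injective with image `D`; relative distances are expressed as lower bounds on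
the normalized Hamming distance between distinct codewords. -/
theorem stmt_0 {Sig Del : Type*} [Fintype Sig] [Fintype Del]
    [DecidableEq Sig] [DecidableEq Del]
    {n k : ℕ} (hn : 0 < n) (hk : 0 < k)
    (C : Set (Fin n → Sig)) (hC : C.Nonempty)
    (f : Sig → (Fin k → Del)) (hf : Function.Injective f)
    (δC δD : ℝ) (hδC0 : 0 ≤ δC) (hδD0 : 0 ≤ δD)
    (hδC : ∀ u ∈ C, ∀ v ∈ C, u ≠ v → δC ≤ (hammingDist u v : ℝ) / n)
    (hδD : ∀ a b : Sig, a ≠ b → δD ≤ (hammingDist (f a) (f b) : ℝ) / k) :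
    ∀ u ∈ C, ∀ v ∈ C, u ≠ v →
      δC * δD ≤
        (hammingDist (fun p : Fin n × Fin k => f (u p.1) p.2)
          (fun p : Fin n × Fin k => f (v p.1) p.2) : ℝ) / (n * k) := by
  intro u hu v hv huv
  have hn' : (0:ℝ) < n := by exact_mod_cast hn
  have hk' : (0:ℝ) < k := by exact_mod_cast hk
  have hnk : (0:ℝ) < (n:ℝ) * k := by positivity
  -- split the big Hamming distance as a sum over blocks
  have key : hammingDist (fun p : Fin n × Fin k => f (u p.1) p.2)
      (fun p : Fin n × Fin k => f (v p.1) p.2)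
      = ∑ i : Fin n, hammingDist (f (u i)) (f (v i)) := by
    simp only [hammingDist, Finset.card_filter]
    rw [Fintype.sum_prod_type]
  rw [key, le_div_iff₀ hnk]
  set S : Finset (Fin n) := Finset.univ.filter fun i => u i ≠ v i with hS
  have hScard : δC * n ≤ (S.card : ℝ) := by
    have := hδC u hu v hv huv
    rw [le_div_iff₀ hn'] at this
    simpa [hammingDist, hS] using this
  have hblock : ∀ i ∈ S, δD * k ≤ (hammingDist (f (u i)) (f (v i)) : ℝ) := by
    intro i hi
    have hne : u i ≠ v i := by simpa [hS] using hi
    have := hδD (u i) (v i) hne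
    rwa [le_div_iff₀ hk'] at this
  calc δC * δD * ((n:ℝ) * k) = (δC * n) * (δD * k) := by ring
    _ ≤ (S.card : ℝ) * (δD * k) := by
        apply mul_le_mul_of_nonneg_right hScard (by positivity)
    _ = ∑ _i ∈ S, δD * k := by rw [Finset.sum_const, nsmul_eq_mul]
    _ ≤ ∑ i ∈ S, (hammingDist (f (u i)) (f (v i)) : ℝ) :=
        Finset.sum_le_sum hblock
    _ ≤ ∑ i : Fin n, (hammingDist (f (u i)) (f (v i)) : ℝ) :=
        Finset.sum_le_sum_of_subset_of_nonneg (Finset.subset_univ S)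
          (fun _ _ _ => by positivity)
    _ = ((∑ i : Fin n, hammingDist (f (u i)) (f (v i)) : ℕ) : ℝ) := by
        push_cast; ring
end

section
/- Let S be a finite set, Δ a finite alphabet, and f_1,…,f_n : S → Δ functions such that s ↦ (f_1(s),…,f_n(s)) is injective, and suppose |S| ≥ 2. Suppose the code D = {(f_1(s),…,f_n(s)) : s ∈ S} ⊆ Δ^n admits some q-query tester with positive soundness (equivalently, D is defined by q-letter constraints). Then a word w ∈ Δ^n belongs to D if and only if, for every subset T ⊆ [n] of size at most q such that the functions (f_i)_{i∈T} are dependent (i.e. the image of s ↦ (f_i(s))_{i∈T} is a proper subset of Δ^T), the tuple (w_i)_{i∈T} lies in that image. -/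
/-- If the code `D = {(f_1 s, …, f_n s) : s ∈ S} ⊆ Del^n` is defined by
`q`-letter constraints (i.e. it is the common solution set of a family of
constraints each reading at most `q` coordinates), then a word `w ∈ Del^n`
belongs to `D` if and only if it passes every `q`-tuple dependence check:
for every `q`-tuple of coordinates whose associated functions are dependent,
the restriction of `w` lies in the image. -/
theorem stmt_2 {S Del : Type*} [Fintype S] [Fintype Del]
    {n q : ℕ} (hS : 2 ≤ Fintype.card S)
    (f : Fin n → S → Del)
    (hinj : Function.Injective (fun s : S => fun i => f i s))
    (D : Set (Fin n → Del))
    (hD : D = Set.range (fun s : S => fun i => f i s))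
    {I : Type*} (a : I → Fin q → Fin n) (P : I → (Fin q → Del) → Prop)
    (hconstr : ∀ w : Fin n → Del, w ∈ D ↔ ∀ i, P i (fun j => w (a i j))) :
    ∀ w : Fin n → Del,
      w ∈ D ↔
        ∀ b : Fin q → Fin n,
          Set.range (fun s : S => fun j => f (b j) s) ≠ Set.univ →
            (fun j => w (b j)) ∈ Set.range (fun s : S => fun j => f (b j) s) := by
  intro w
  constructor
  · rintro hw b -
    rw [hD] at hw
    obtain ⟨s, rfl⟩ := hw
    exact ⟨s, rfl⟩
  · intro h
    rw [hconstr]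
    intro i
    have hmem : (fun j => w (a i j)) ∈ Set.range (fun s : S => fun j => f (a i j) s) := by
      by_cases hc : Set.range (fun s : S => fun j => f (a i j) s) = Set.univ
      · rw [hc]; trivial
      · exact h (a i) hc
    obtain ⟨s, hs⟩ := hmem
    have hwD : (fun j => f j s : Fin n → Del) ∈ D := by
      rw [hD]; exact ⟨s, rfl⟩
    have := (hconstr _).mp hwD i
    have heq : (fun j => w (a i j)) = (fun j => f (a i j) s) := hs.symm
    rw [heq]
    exact this
end

section
/- Let V be a finite-dimensional vector space over a finite field F, and let Δ = F^m with m ≥ 2. Let f_1,…,f_n enumerate all F-linear maps from V to Δ. If a word w ∈ Δ^n satisfies: for every pair (i,j) with f_i, f_j dependent (meaning {(f_i(v), f_j(v)) : v ∈ V} ⊊ Δ²), the pair (w_i, w_j) lies in {(f_i(v), f_j(v)) : v ∈ V}, then there exists v ∈ V with w_i = f_i(v) for all i. In other words, the generalized Hadamard code H(V,Δ) is exactly the set of words passing all 2-letter dependence constraints. -/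
/-- The generalized Hadamard code `H(V, F^m)` (`m ≥ 2`) is exactly the set of
words passing all 2-letter dependence constraints: if `w`, indexed by all
`F`-linear maps `V → F^m`, satisfies that for every dependent pair `(φ, ψ)`
the pair `(w φ, w ψ)` lies in the image of `v ↦ (φ v, ψ v)`, then `w` is the
evaluation at some `v ∈ V`. -/
theorem stmt_3 {F : Type*} [Field F] [Fintype F]
    {V : Type*} [AddCommGroup V] [Module F V] [FiniteDimensional F V]
    {m : ℕ} (hm : 2 ≤ m)
    (w : (V →ₗ[F] (Fin m → F)) → (Fin m → F))
    (hw : ∀ φ ψ : V →ₗ[F] (Fin m → F),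
      Set.range (fun v : V => (φ v, ψ v)) ≠ Set.univ →
        (w φ, w ψ) ∈ Set.range (fun v : V => (φ v, ψ v))) :
    ∃ v : V, ∀ φ : V →ₗ[F] (Fin m → F), w φ = φ v := by
  set i0 : Fin m := ⟨0, by omega⟩ with hi0
  set i1 : Fin m := ⟨1, by omega⟩ with hi1
  have hne : i0 ≠ i1 := by simp [hi0, hi1, Fin.ext_iff]
  -- master lemma : if ψ = L ∘ φ then w ψ = L (w φ)
  have key : ∀ (φ ψ : V →ₗ[F] (Fin m → F)) (L : (Fin m → F) →ₗ[F] (Fin m → F)),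
      ψ = L ∘ₗ φ → w ψ = L (w φ) := by
    intro φ ψ L hL
    have hdep : Set.range (fun v : V => (φ v, ψ v)) ≠ Set.univ := by
      intro hu
      have hmem : ((0, Pi.single i0 1) : (Fin m → F) × (Fin m → F)) ∈
          Set.range (fun v : V => (φ v, ψ v)) := by
        rw [hu]; trivial
      obtain ⟨v, hv⟩ := hmem
      have h1 : φ v = 0 := congrArg Prod.fst hv
      have h2 : ψ v = Pi.single i0 1 := congrArg Prod.snd hv
      have hz : ψ v = 0 := by rw [hL, LinearMap.comp_apply, h1, map_zero]
      rw [hz] at h2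
      have h3 := congrFun h2 i0
      rw [Pi.zero_apply, Pi.single_eq_same] at h3
      exact zero_ne_one h3
    obtain ⟨v, hv⟩ := hw φ ψ hdep
    have h1 : φ v = w φ := congrArg Prod.fst hv
    have h2 : ψ v = w ψ := congrArg Prod.snd hv
    rw [← h2, hL, LinearMap.comp_apply, h1]
  -- insertion of a functional into coordinate i
  set ins : Fin m → (V →ₗ[F] F) → (V →ₗ[F] (Fin m → F)) :=
    fun i f => (LinearMap.single F (fun _ : Fin m => F) i) ∘ₗ f with hins
  have ins_apply : ∀ i f v, ins i f v = Pi.single i (f v) := fun _ _ _ => rfl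
  set a : (V →ₗ[F] F) → F := fun f => w (ins i0 f) i0 with ha
  -- for φ = ins i0 f + ins i1 g, relate coordinates
  have hcoord : ∀ (f g : V →ₗ[F] F),
      w (ins i0 f + ins i1 g) i0 = a f ∧ w (ins i0 f + ins i1 g) i1 = a g := by
    intro f g
    have h1 : w (ins i0 f) = (LinearMap.single F (fun _ : Fin m => F) i0 ∘ₗ
        LinearMap.proj i0) (w (ins i0 f + ins i1 g)) := by
      apply key
      ext v j
      simp [ins_apply, LinearMap.proj_apply, Pi.single_apply, hne, hne.symm]
    have h2 : w (ins i0 g) = (LinearMap.single F (fun _ : Fin m => F) i0 ∘ₗ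
        LinearMap.proj i1) (w (ins i0 f + ins i1 g)) := by
      apply key
      ext v j
      simp [ins_apply, LinearMap.proj_apply, Pi.single_apply, hne, hne.symm]
    constructor
    · have h3 := congrFun h1 i0
      simp only [LinearMap.comp_apply, LinearMap.proj_apply,
        LinearMap.single_apply, Pi.single_eq_same] at h3
      exact h3.symm
    · have h3 := congrFun h2 i0
      simp only [LinearMap.comp_apply, LinearMap.proj_apply,
        LinearMap.single_apply, Pi.single_eq_same] at h3
      exact h3.symm
  have hadd : ∀ f g : V →ₗ[F] F, a (f + g) = a f + a g := by
    intro f g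
    have h3 : w (ins i0 (f + g)) = (LinearMap.single F (fun _ : Fin m => F) i0 ∘ₗ
        ((LinearMap.proj i0 : (Fin m → F) →ₗ[F] F) + LinearMap.proj i1)) (w (ins i0 f + ins i1 g)) := by
      apply key
      ext v j
      simp [ins_apply, LinearMap.proj_apply, Pi.single_apply, hne, hne.symm]
    have h4 := congrFun h3 i0
    simp only [LinearMap.comp_apply, LinearMap.add_apply, LinearMap.proj_apply,
      LinearMap.single_apply, Pi.single_eq_same] at h4
    have h5 : a (f + g) = w (ins i0 (f+g)) i0 := rfl
    rw [h5, h4, (hcoord f g).1, (hcoord f g).2]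
  have hsmul : ∀ (c : F) (f : V →ₗ[F] F), a (c • f) = c * a f := by
    intro c f
    set φ := ins i0 f + ins i1 (c • f) with hφ
    have hself : w φ = (LinearMap.id : (Fin m → F) →ₗ[F] (Fin m → F)) (w φ) := by
      apply key
      rfl
    -- w φ is in the range of φ
    obtain ⟨v, hv⟩ := by
      refine hw φ φ ?_
      intro hu
      have hmem : ((0, Pi.single i0 1) : (Fin m → F) × (Fin m → F)) ∈
          Set.range (fun v : V => (φ v, φ v)) := by
        rw [hu]; trivial
      obtain ⟨v, hv⟩ := hmem
      have h1 : φ v = 0 := congrArg Prod.fst hv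
      have h2 : φ v = Pi.single i0 1 := congrArg Prod.snd hv
      rw [h1] at h2
      have h3 := congrFun h2.symm i0
      rw [Pi.zero_apply, Pi.single_eq_same] at h3
      exact one_ne_zero h3
    have hv1 : φ v = w φ := congrArg Prod.fst hv
    have hrel : w φ i1 = c * w φ i0 := by
      rw [← hv1]
      have : φ v = Pi.single i0 (f v) + Pi.single i1 (c * f v) := by
        simp [hφ, ins_apply]
      rw [this]
      simp [Pi.single_apply, hne, hne.symm]
    have h1 := (hcoord f (c • f)).1
    have h2 := (hcoord f (c • f)).2
    rw [← h2, ← h1]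
    exact hrel
  -- bundle a as an element of the double dual
  set A : Module.Dual F (Module.Dual F V) :=
    { toFun := a
      map_add' := hadd
      map_smul' := by intro c f; simpa using hsmul c f } with hA
  set v0 : V := (Module.evalEquiv F V).symm A with hv0
  have haval : ∀ f : V →ₗ[F] F, a f = f v0 := by
    intro f
    have h := Module.apply_evalEquiv_symm_apply F V f A
    exact h.symm
  refine ⟨v0, fun φ => ?_⟩
  funext i
  have h1 : w (ins i0 ((LinearMap.proj i : (Fin m → F) →ₗ[F] F) ∘ₗ φ)) =
      (LinearMap.single F (fun _ : Fin m => F) i0 ∘ₗ LinearMap.proj i) (w φ) := by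
    apply key
    ext v j
    simp [ins_apply, LinearMap.proj_apply]
  have h2 := congrFun h1 i0
  simp only [LinearMap.comp_apply, LinearMap.proj_apply, LinearMap.single_apply,
    Pi.single_eq_same] at h2
  have h3 : a ((LinearMap.proj i : (Fin m → F) →ₗ[F] F) ∘ₗ φ) = w φ i := h2
  rw [haval] at h3
  simpa using h3.symm
end

section
/- Let S be a finite set with |S| ≥ 3 and let f_1,…,f_n enumerate all functions S → {0,1} (n = 2^{|S|}). Fix three distinct points x_1, x_2, x_3 ∈ S and define w ∈ {0,1}^n by w_i = maj(f_i(x_1), f_i(x_2), f_i(x_3)). Then w passes every 2-coordinate dependence constraint (for every dependent pair (f_i, f_j), the pair (w_i, w_j) lies in the image of f_i × f_j), yet w does not belong to the long code L(S, {0,1}). Hence L(S,{0,1}) is not defined by 2-letter constraints when |S| ≥ 3. -/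
/-- The majority of three bits. -/
def maj (a b c : Bool) : Bool := (a && b) || (a && c) || (b && c)

lemma maj_pair (a₁ a₂ a₃ b₁ b₂ b₃ : Bool) :
    (maj a₁ a₂ a₃ = a₁ ∧ maj b₁ b₂ b₃ = b₁) ∨
    (maj a₁ a₂ a₃ = a₂ ∧ maj b₁ b₂ b₃ = b₂) ∨
    (maj a₁ a₂ a₃ = a₃ ∧ maj b₁ b₂ b₃ = b₃) := by
  revert a₁ a₂ a₃ b₁ b₂ b₃; decide

/-- For `|S| ≥ 3`, the word `w`, indexed by all functions `S → Bool` and given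
by `w f = maj (f x₁) (f x₂) (f x₃)` for three distinct points `x₁, x₂, x₃`,
passes every 2-coordinate dependence constraint of the long code
`L(S, {0,1})`, yet is not a codeword. Hence `L(S,{0,1})` is not defined by
2-letter constraints. -/
theorem stmt_7 {S : Type*} [Fintype S] (h3 : 3 ≤ Fintype.card S)
    (x₁ x₂ x₃ : S) (h12 : x₁ ≠ x₂) (h13 : x₁ ≠ x₃) (h23 : x₂ ≠ x₃)
    (w : (S → Bool) → Bool)
    (hw : ∀ f : S → Bool, w f = maj (f x₁) (f x₂) (f x₃)) :
    (∀ f g : S → Bool,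
        Set.range (fun s : S => (f s, g s)) ≠ Set.univ →
          (w f, w g) ∈ Set.range (fun s : S => (f s, g s))) ∧
      ¬ ∃ s : S, ∀ f : S → Bool, w f = f s := by
  classical
  constructor
  · intro f g _
    rcases maj_pair (f x₁) (f x₂) (f x₃) (g x₁) (g x₂) (g x₃) with ⟨h1, h2⟩ | ⟨h1, h2⟩ | ⟨h1, h2⟩
    · exact ⟨x₁, by simp [hw f, hw g, h1, h2]⟩
    · exact ⟨x₂, by simp [hw f, hw g, h1, h2]⟩
    · exact ⟨x₃, by simp [hw f, hw g, h1, h2]⟩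
  · rintro ⟨s, hs⟩
    set f : S → Bool := fun t => decide (t = s) with hf
    have h1 : w f = true := by rw [hs f]; simp [hf]
    have h2 : w f = maj (f x₁) (f x₂) (f x₃) := hw f
    -- at most one of x₁, x₂, x₃ equals s
    by_cases e1 : x₁ = s
    · have e2 : x₂ ≠ s := fun h => h12 (e1.trans h.symm)
      have e3 : x₃ ≠ s := fun h => h13 (e1.trans h.symm)
      simp [hf, e1, e2, e3, maj] at h2
      rw [h1] at h2; exact Bool.noConfusion h2
    · by_cases e2 : x₂ = s
      · have e3 : x₃ ≠ s := fun h => h23 (e2.trans h.symm)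
        simp [hf, e1, e2, e3, maj] at h2
        rw [h1] at h2; exact Bool.noConfusion h2
      · by_cases e3 : x₃ = s
        · simp [hf, e1, e2, e3, maj] at h2
          rw [h1] at h2; exact Bool.noConfusion h2
        · simp [hf, e1, e2, e3, maj] at h2
          rw [h1] at h2; exact Bool.noConfusion h2
end

section
/- Let S be a finite set and Δ a finite alphabet with |Δ| ≥ 3. Let f_1,…,f_n enumerate all functions S → Δ (n = |Δ|^{|S|}). If a word w ∈ Δ^n satisfies: for every dependent pair (f_i, f_j) (meaning {(f_i(s), f_j(s)) : s ∈ S} ⊊ Δ²), the pair (w_i, w_j) lies in {(f_i(s), f_j(s)) : s ∈ S}, then there exists s ∈ S with w_i = f_i(s) for all i ∈ [n]. In other words, the generalized long code L(S,Δ) is exactly the set of words passing all 2-coordinate dependence constraints. -/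
/-- For `|Del| ≥ 3`, the generalized long code `L(S, Del)`, indexed by all
functions `S → Del`, is exactly the set of words passing all 2-coordinate
dependence constraints: `w` is an evaluation at some `s ∈ S` if and only if
for every dependent pair `(f, g)` the pair `(w f, w g)` lies in the image of
`s ↦ (f s, g s)`. -/
theorem stmt_10 {S Del : Type*} [Fintype S] [Nonempty S] [Fintype Del]
    (hDel : 3 ≤ Fintype.card Del)
    (w : (S → Del) → Del) :
    (∃ s : S, ∀ f : S → Del, w f = f s) ↔
      (∀ f g : S → Del,
        Set.range (fun s : S => (f s, g s)) ≠ Set.univ →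
          (w f, w g) ∈ Set.range (fun s : S => (f s, g s))) := by
  classical
  constructor
  · rintro ⟨s, hs⟩ f g _
    exact ⟨s, by rw [hs f, hs g]⟩
  intro H
  obtain ⟨e⟩ : Nonempty (Fin 3 ↪ Del) :=
    Function.Embedding.nonempty_of_card_le (by simpa using hDel)
  set a := e 0 with ha
  set b := e 1 with hb
  set c := e 2 with hc
  have hab : a ≠ b := fun h => by simpa using e.injective h
  have hac : a ≠ c := fun h => by simpa using e.injective h
  have hbc : b ≠ c := fun h => by simpa using e.injective h
  set χ : Finset S → S → Del := fun B s => if s ∈ B then a else b with hχ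
  -- membership in indicator
  have χ_mem : ∀ (B : Finset S) (s : S), χ B s = a → s ∈ B := by
    intro B s h
    by_contra hs
    simp only [hχ, if_neg hs] at h
    exact hab h.symm
  have χ_of_mem : ∀ (B : Finset S) (s : S), s ∈ B → χ B s = a := by
    intro B s h; simp [hχ, h]
  -- main induction
  have main : ∀ n (B : Finset S), B.card ≤ n → B.Nonempty → w (χ B) = a →
      ∃ s0 : S, w (χ {s0}) = a := by
    intro n
    induction n with
    | zero =>
      intro B hB hne _
      have := Finset.card_pos.mpr hne
      omega
    | succ n ih =>
      intro B hB hne hwB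
      obtain ⟨s0, hs0⟩ := hne
      set f3 : S → Del := fun s => if s = s0 then a else if s ∈ B then b else c with hf3
      -- pair (χ B, f3) : w f3 ∈ {a, b}
      have hdep1 : Set.range (fun s : S => (χ B s, f3 s)) ≠ Set.univ := by
        intro h
        have : (a, c) ∈ Set.range (fun s : S => (χ B s, f3 s)) := h ▸ Set.mem_univ _
        obtain ⟨s, hs⟩ := this
        rw [Prod.mk.injEq] at hs
        have hsB : s ∈ B := χ_mem B s hs.1
        rcases eq_or_ne s s0 with h' | h'
        · simp only [hf3, if_pos h'] at hs; exact hac hs.2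
        · simp only [hf3, if_neg h', if_pos hsB] at hs; exact hbc hs.2
      obtain ⟨s, hs⟩ := H (χ B) f3 hdep1
      rw [Prod.mk.injEq, hwB] at hs
      have hsB : s ∈ B := χ_mem B s hs.1
      have hwf3 : w f3 = a ∨ w f3 = b := by
        rcases eq_or_ne s s0 with h' | h'
        · left; rw [← hs.2]; simp [hf3, h']
        · right; rw [← hs.2]; simp [hf3, h', hsB]
      rcases hwf3 with hwf3 | hwf3
      · -- w f3 = a : s0 is a dictator candidate
        refine ⟨s0, ?_⟩
        have hdep2 : Set.range (fun s : S => (χ {s0} s, f3 s)) ≠ Set.univ := by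
          intro h
          have : (b, a) ∈ Set.range (fun s : S => (χ {s0} s, f3 s)) := h ▸ Set.mem_univ _
          obtain ⟨t, ht⟩ := this
          rw [Prod.mk.injEq] at ht
          have ht0 : t ≠ s0 := by
            intro h'
            have := χ_of_mem {s0} t (by simp [h'])
            rw [this] at ht; exact hab ht.1
          simp only [hf3, if_neg ht0] at ht
          rcases ht.2.symm.symm with h2
          by_cases htB : t ∈ B
          · rw [if_pos htB] at h2; exact hab h2.symm
          · rw [if_neg htB] at h2; exact hac h2.symm
        obtain ⟨t, ht⟩ := H (χ {s0}) f3 hdep2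
        rw [Prod.mk.injEq, hwf3] at ht
        have ht0 : t = s0 := by
          by_contra h'
          simp only [hf3, if_neg h'] at ht
          by_cases htB : t ∈ B
          · rw [if_pos htB] at ht; exact hab ht.2.symm
          · rw [if_neg htB] at ht; exact hac ht.2.symm
        rw [← ht.1, χ_of_mem {s0} t (by simp [ht0])]
      · -- w f3 = b : recurse on B \ {s0}
        set B' := B.erase s0 with hB'
        have hdep3 : Set.range (fun s : S => (χ B' s, f3 s)) ≠ Set.univ := by
          intro h
          have : (b, b) ∈ Set.range (fun s : S => (χ B' s, f3 s)) := h ▸ Set.mem_univ _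
          obtain ⟨t, ht⟩ := this
          rw [Prod.mk.injEq] at ht
          have htB' : t ∉ B' := by
            intro h'
            rw [χ_of_mem B' t h'] at ht; exact hab ht.1
          rcases eq_or_ne t s0 with h' | h'
          · simp only [hf3, if_pos h'] at ht; exact hab ht.2
          · have htB : t ∉ B := fun hh => htB' (Finset.mem_erase.mpr ⟨h', hh⟩)
            simp only [hf3, if_neg h', if_neg htB] at ht
            exact hbc ht.2.symm
        obtain ⟨t, ht⟩ := H (χ B') f3 hdep3
        rw [Prod.mk.injEq, hwf3] at ht
        have ht0 : t ≠ s0 := by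
          intro h'
          simp only [hf3, if_pos h'] at ht
          exact hab ht.2
        have htB : t ∈ B := by
          by_contra hh
          simp only [hf3, if_neg ht0, if_neg hh] at ht
          exact hbc ht.2.symm
        have htB' : t ∈ B' := Finset.mem_erase.mpr ⟨ht0, htB⟩
        have hcard : B'.card ≤ n := by
          have h1 : B'.card = B.card - 1 := by rw [hB']; exact Finset.card_erase_of_mem hs0
          have h2 := Finset.card_pos.mpr ⟨s0, hs0⟩
          omega
        exact ih B' hcard ⟨t, htB'⟩ (by rw [← ht.1, χ_of_mem B' t htB'])
  -- χ univ = const a, and w (const a) = a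
  have hwconst : w (χ Finset.univ) = a := by
    have hdep : Set.range (fun s : S => (χ Finset.univ s, χ Finset.univ s)) ≠ Set.univ := by
      intro h
      have : (b, a) ∈ Set.range (fun s : S => (χ Finset.univ s, χ Finset.univ s)) :=
        h ▸ Set.mem_univ _
      obtain ⟨t, ht⟩ := this
      rw [Prod.mk.injEq] at ht
      rw [χ_of_mem Finset.univ t (Finset.mem_univ t)] at ht
      exact hab ht.1
    obtain ⟨t, ht⟩ := H (χ Finset.univ) (χ Finset.univ) hdep
    rw [Prod.mk.injEq] at ht
    rw [χ_of_mem Finset.univ t (Finset.mem_univ t)] at ht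
    exact ht.1.symm
  obtain ⟨s0, hs0⟩ := main (Finset.univ.card) Finset.univ le_rfl Finset.univ_nonempty hwconst
  -- conclude: s0 is the dictator
  refine ⟨s0, fun f => ?_⟩
  obtain ⟨y, hy⟩ := Fintype.exists_ne_of_one_lt_card (by omega) (f s0)
  have hdep : Set.range (fun s : S => (χ {s0} s, f s)) ≠ Set.univ := by
    intro h
    have : (a, y) ∈ Set.range (fun s : S => (χ {s0} s, f s)) := h ▸ Set.mem_univ _
    obtain ⟨t, ht⟩ := this
    rw [Prod.mk.injEq] at ht
    have := χ_mem {s0} t ht.1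
    rw [Finset.mem_singleton] at this
    rw [this] at ht
    exact hy ht.2.symm
  obtain ⟨t, ht⟩ := H (χ {s0}) f hdep
  rw [Prod.mk.injEq, hs0] at ht
  have := χ_mem {s0} t ht.1
  rw [Finset.mem_singleton] at this
  rw [← ht.2, this]
end

section
/- Let C ⊆ Σ^n be a code with a q-query tester T of soundness μ > 0, and let Δ ⊇ Σ be a larger finite alphabet. Then C, viewed as a code inside Δ^n, admits a q'-query tester (q' = max(q,1)) with soundness μ/(μ+1). Concretely: the tester that with probability μ/(μ+1) checks a uniformly random coordinate for membership in Σ, and with probability 1/(μ+1) runs T (rejecting if any queried letter is outside Σ), rejects every u ∈ Δ^n with probability at least (μ/(μ+1))·dist(u, C), where dist is normalized Hamming distance in Δ^n. -/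
/-- Alphabet increase (Proposition `PR:alphabet_increase`): let `C` be a code
over the sub-alphabet `Sig ⊆ Del` with a non-adaptive `q`-query tester
`(T, a, p)` of soundness `μ > 0`.  Then the combined tester which with
probability `μ/(μ+1)` checks a uniformly random coordinate for membership in
`Sig`, and with probability `1/(μ+1)` runs `T` (rejecting if some queried
letter lies outside `Sig`), rejects every `u ∈ Del^n` with probability at
least `(μ/(μ+1)) · dist(u, C)`. -/
theorem stmt_12 {Del : Type*} [Fintype Del] [DecidableEq Del]
    {n q : ℕ} (hn : 0 < n)
    (Sig : Set Del) [DecidablePred (· ∈ Sig)]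
    (C : Finset (Fin n → Del)) (hC : C.Nonempty)
    (hCSig : ∀ w ∈ C, ∀ i, w i ∈ Sig)
    {I : Type*} [Fintype I]
    (p : I → ℝ) (hp0 : ∀ i, 0 ≤ p i) (hp1 : ∑ i, p i = 1)
    (a : I → Fin q → Fin n)
    (T : I → (Fin q → Del) → Bool)
    (hcomplete : ∀ w ∈ C, ∀ i, T i (fun j => w (a i j)) = true)
    (μ : ℝ) (hμ : 0 < μ)
    (hsound : ∀ w : Fin n → Del, (∀ ℓ, w ℓ ∈ Sig) →
      μ * ((C.inf' hC fun c => hammingDist w c : ℕ) : ℝ) / n ≤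
        ∑ i with T i (fun j => w (a i j)) = false, p i) :
    ∀ u : Fin n → Del,
      μ / (μ + 1) * ((C.inf' hC fun c => hammingDist u c : ℕ) : ℝ) / n ≤
        μ / (μ + 1) * (((Finset.univ.filter fun ℓ : Fin n => u ℓ ∉ Sig).card : ℝ) / n) +
          1 / (μ + 1) *
            ∑ i with (T i (fun j => u (a i j)) = false ∨ ¬ ∀ j, u (a i j) ∈ Sig),
              p i := by
  intro u
  obtain ⟨c0, hc0⟩ := hC
  set u' : Fin n → Del := fun ℓ => if u ℓ ∈ Sig then u ℓ else c0 ℓ with hu'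
  have hu'Sig : ∀ ℓ, u' ℓ ∈ Sig := by
    intro ℓ; simp only [hu']
    split
    · assumption
    · exact hCSig c0 hc0 ℓ
  have hd1 : (hammingDist u u' : ℝ) ≤
      ((Finset.univ.filter fun ℓ : Fin n => u ℓ ∉ Sig).card : ℝ) := by
    have : hammingDist u u' ≤ (Finset.univ.filter fun ℓ : Fin n => u ℓ ∉ Sig).card := by
      apply Finset.card_le_card
      intro ℓ hℓ
      simp only [hammingDist, Finset.mem_filter, Finset.mem_univ, true_and] at hℓ ⊢
      intro hmem
      apply hℓ
      simp [hu', hmem]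
    exact_mod_cast this
  obtain ⟨c, hcC, hcmin⟩ := Finset.exists_mem_eq_inf' ⟨c0, hc0⟩ (fun c => hammingDist u' c)
  have htri : (C.inf' ⟨c0, hc0⟩ fun c => hammingDist u c) ≤
      hammingDist u u' + (C.inf' ⟨c0, hc0⟩ fun c => hammingDist u' c) := by
    rw [hcmin]
    calc (C.inf' ⟨c0, hc0⟩ fun c => hammingDist u c) ≤ hammingDist u c :=
          Finset.inf'_le _ hcC
      _ ≤ hammingDist u u' + hammingDist u' c := hammingDist_triangle _ _ _
  have hs := hsound u' hu'Sig
  have hsub : (Finset.univ.filter fun i => T i (fun j => u' (a i j)) = false) ⊆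
      (Finset.univ.filter fun i =>
        T i (fun j => u (a i j)) = false ∨ ¬ ∀ j, u (a i j) ∈ Sig) := by
    intro i hi
    simp only [Finset.mem_filter, Finset.mem_univ, true_and] at hi ⊢
    by_cases h : ∀ j, u (a i j) ∈ Sig
    · left
      have heq : (fun j => u' (a i j)) = fun j => u (a i j) := by
        funext j; simp [hu', h j]
      rwa [heq] at hi
    · right; exact h
  have hsum : ∑ i with T i (fun j => u' (a i j)) = false, p i ≤
      ∑ i with (T i (fun j => u (a i j)) = false ∨ ¬ ∀ j, u (a i j) ∈ Sig), p i :=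
    Finset.sum_le_sum_of_subset_of_nonneg hsub (fun i _ _ => hp0 i)
  have hμ1 : (0:ℝ) < μ + 1 := by linarith
  have hnpos : (0:ℝ) < n := by exact_mod_cast hn
  set D : ℝ := ((C.inf' ⟨c0, hc0⟩ fun c => hammingDist u c : ℕ) : ℝ)
  set D' : ℝ := ((C.inf' ⟨c0, hc0⟩ fun c => hammingDist u' c : ℕ) : ℝ)
  set A : ℝ := ((Finset.univ.filter fun ℓ : Fin n => u ℓ ∉ Sig).card : ℝ)
  set S : ℝ := ∑ i with (T i (fun j => u (a i j)) = false ∨ ¬ ∀ j, u (a i j) ∈ Sig), p i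
  have hDle : D ≤ A + D' := by
    have h : D ≤ (hammingDist u u' : ℝ) + D' := by
      simp only [D, D']
      exact_mod_cast htri
    linarith
  have hS : μ * D' / n ≤ S := le_trans hs hsum
  have hk : (0:ℝ) ≤ μ / (μ + 1) := by positivity
  have h2 : μ / (μ + 1) * D' / n ≤ 1 / (μ + 1) * S := by
    have hrw : μ / (μ + 1) * D' / n = 1 / (μ + 1) * (μ * D' / n) := by
      field_simp
    rw [hrw]
    gcongr
  have h1 : μ / (μ + 1) * D / n ≤ μ / (μ + 1) * A / n + μ / (μ + 1) * D' / n := by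
    have : μ / (μ + 1) * D / n ≤ μ / (μ + 1) * (A + D') / n := by gcongr
    linarith [this, (by ring : μ / (μ + 1) * (A + D') / n
      = μ / (μ + 1) * A / n + μ / (μ + 1) * D' / n)]
  have hfin : μ / (μ + 1) * (A / n) = μ / (μ + 1) * A / n := by ring
  rw [hfin]
  linarith
end

section
/- Let C ⊆ Σ^n be a code with a q-query tester T = (T^{(i)}, (a_1^{(i)},…,a_q^{(i)}), p_i)_{i∈I} of soundness μ > 0, and let Δ be another alphabet with |Δ| ≥ 2. Then C admits a Δ-separable q-query tester with soundness μ/|Σ|^q. (The new tester draws i ∼ p and u ∈ Σ^q uniformly, and applies T^{(i)} only when the queried letters equal u.) -/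
/-- Reduction to a separable tester (Theorem `TH:reduction_to_sep`): if
`C ⊆ Sig^n` has a `q`-query tester of soundness `μ > 0` and `Del` is another
alphabet (`|Del| ≥ 2`), then `C` admits a `Del`-separable `q`-query tester
with soundness `μ / |Sig|^q`.  `Del`-separability means each predicate
factors as `G ∘ (g_1 × ⋯ × g_q)` with `g_j : Sig → Del`. -/
theorem stmt_13 {Sig Del : Type*} [Fintype Sig] [DecidableEq Sig] [Fintype Del]
    (hDel : 2 ≤ Fintype.card Del)
    {n q : ℕ} (hn : 0 < n)
    (C : Finset (Fin n → Sig)) (hC : C.Nonempty)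
    {I : Type*} [Fintype I]
    (p : I → ℝ) (hp0 : ∀ i, 0 ≤ p i) (hp1 : ∑ i, p i = 1)
    (a : I → Fin q → Fin n) (T : I → (Fin q → Sig) → Bool)
    (hcomplete : ∀ w ∈ C, ∀ i, T i (fun j => w (a i j)) = true)
    (μ : ℝ) (hμ : 0 < μ)
    (hsound : ∀ w : Fin n → Sig,
      μ * ((C.inf' hC fun c => hammingDist w c : ℕ) : ℝ) / n ≤
        ∑ i with T i (fun j => w (a i j)) = false, p i) :
    ∃ (p' : I × (Fin q → Sig) → ℝ) (a' : I × (Fin q → Sig) → Fin q → Fin n)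
      (T' : I × (Fin q → Sig) → (Fin q → Sig) → Bool),
      (∀ i, 0 ≤ p' i) ∧ (∑ i, p' i = 1) ∧
      (∀ w ∈ C, ∀ i, T' i (fun j => w (a' i j)) = true) ∧
      (∀ i, ∃ (g : Fin q → Sig → Del) (G : (Fin q → Del) → Bool),
        ∀ u : Fin q → Sig, T' i u = G (fun j => g j (u j))) ∧
      (∀ w : Fin n → Sig,
        μ / (Fintype.card Sig : ℝ) ^ q *
            ((C.inf' hC fun c => hammingDist w c : ℕ) : ℝ) / n ≤
          ∑ i with T' i (fun j => w (a' i j)) = false, p' i) := by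
  obtain ⟨d0, d1, hd⟩ := Fintype.exists_pair_of_one_lt_card (by omega : 1 < Fintype.card Del)
  have hSig : Nonempty Sig := ⟨hC.choose ⟨0, hn⟩⟩
  have hScard : 0 < Fintype.card Sig := Fintype.card_pos
  set S : ℝ := (Fintype.card Sig : ℝ) ^ q with hSdef
  have hS : 0 < S := by positivity
  refine ⟨fun x => p x.1 / S, fun x => a x.1,
    fun x v => if v = x.2 then T x.1 x.2 else true, ?_, ?_, ?_, ?_, ?_⟩
  · exact fun x => div_nonneg (hp0 x.1) hS.le
  · rw [Fintype.sum_prod_type]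
    have : ∀ i : I, ∑ _u : Fin q → Sig, p i / S = p i := by
      intro i
      rw [Finset.sum_const, Finset.card_univ, Fintype.card_fun, Fintype.card_fin,
        nsmul_eq_mul]
      push_cast
      rw [← hSdef]
      field_simp
    simp only [this, hp1]
  · intro w hw x
    simp only
    split_ifs with h
    · rw [← h]; exact hcomplete w hw x.1
    · rfl
  · intro x
    classical
    refine ⟨fun j s => if s = x.2 j then d0 else d1,
      fun v => if v = fun _ => d0 then T x.1 x.2 else true, ?_⟩
    intro u
    have key : ((fun j => if u j = x.2 j then d0 else d1) = fun _ => d0) ↔ u = x.2 := by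
      constructor
      · intro h
        funext j
        have := congrFun h j
        by_contra hne
        rw [if_neg hne] at this
        exact hd this.symm
      · intro h; subst h; simp
    by_cases h : u = x.2 <;> simp [key, h]
  · intro w
    have hr : ∑ x : I × (Fin q → Sig) with
        (if (fun j => w (a x.1 j)) = x.2 then T x.1 x.2 else true) = false, p x.1 / S
        = (∑ i with T i (fun j => w (a i j)) = false, p i) / S := by
      rw [Finset.sum_filter, Fintype.sum_prod_type, Finset.sum_div, Finset.sum_filter]
      refine Finset.sum_congr rfl fun i _ => ?_
      rw [Finset.sum_eq_single (fun j => w (a i j))]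
      · simp
      · intro u _ hne
        rw [if_neg (Ne.symm hne)]
        simp
      · intro h; exact absurd (Finset.mem_univ _) h
    calc μ / S * ((C.inf' hC fun c => hammingDist w c : ℕ) : ℝ) / n
        = (μ * ((C.inf' hC fun c => hammingDist w c : ℕ) : ℝ) / n) / S := by ring
      _ ≤ (∑ i with T i (fun j => w (a i j)) = false, p i) / S := by
          gcongr
          exact hsound w
      _ = _ := hr.symm
end

section
/- Let C ⊆ Σ^n be an F-code (a linear subspace) over a finite field F, with an F-linear q-query tester T of soundness μ > 0, and let Δ be a nonzero finite-dimensional F-vector space. Then C admits a linearly Δ-separable F-linear q-query tester with soundness μ/⌈q·dim Σ / dim Δ⌉. -/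
/-! Realise the acceptance space `V_i` of each test as the kernel of a linear map
`ψ_i : Σ^q → Δ^m`, which exists because `dim (Σ^q ⧸ V_i) ≤ q dim Σ ≤ m dim Δ`. The new tester
runs a random test `i` and accepts iff a random coordinate of `ψ_i` vanishes: whenever test `i`
rejects, some coordinate of `ψ_i` is nonzero, so the rejection probability drops by at most a
factor `m`. Each coordinate is a linear map `Σ^q → Δ`, hence a sum of linear maps of the
individual queries. -/

open Module

theorem Submodule.exists_linearMap_ker_eq {K V X : Type*} [Field K]
    [AddCommGroup V] [Module K V] [AddCommGroup X] [Module K X] [FiniteDimensional K X]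
    (W : Submodule K V) [FiniteDimensional K (V ⧸ W)]
    (h : finrank K (V ⧸ W) ≤ finrank K X) :
    ∃ ψ : V →ₗ[K] X, LinearMap.ker ψ = W := by
  obtain ⟨f, hf⟩ := Module.Free.exists_linearMap_injective_of_linearIndependent_of_lift_rank_le
    (M := V ⧸ W) (Module.finBasis K X).linearIndependent
    (by simpa [← Module.finrank_eq_rank] using h)
  exact ⟨f ∘ₗ W.mkQ, by rw [LinearMap.ker_comp, LinearMap.ker_eq_bot.mpr hf]; exact W.ker_mkQ⟩

theorem LinearMap.apply_eq_sum_comp_single {R ι N : Type*} {M : ι → Type*} [Semiring R]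
    [Fintype ι] [DecidableEq ι] [AddCommMonoid N] [Module R N] [∀ i, AddCommMonoid (M i)]
    [∀ i, Module R (M i)] (φ : (∀ i, M i) →ₗ[R] N) (u : ∀ i, M i) :
    φ u = ∑ i, (φ ∘ₗ LinearMap.single R M i) (u i) := by
  simp only [LinearMap.comp_apply, LinearMap.coe_single, ← map_sum, Finset.univ_sum_single]

theorem Finset.sum_filter_le_sum_filter_prod {I J M : Type*} [Fintype I] [Fintype J]
    [AddCommMonoid M] [PartialOrder M] [IsOrderedAddMonoid M]
    (p : I → M) (hp : ∀ i, 0 ≤ p i) {P : I → Prop} {Q : I → J → Prop} [DecidablePred P]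
    [∀ i, DecidablePred (Q i)] (h : ∀ i, P i → ∃ j, Q i j) :
    ∑ i with P i, p i ≤ ∑ ij : I × J with Q ij.1 ij.2, p ij.1 := by
  have hterm (i : I) (j : J) : 0 ≤ if Q i j then p i else 0 := by split_ifs <;> simp [hp i]
  rw [Finset.sum_filter, Finset.sum_filter, Fintype.sum_prod_type]
  gcongr with i
  split_ifs with hPi
  · obtain ⟨j, hj⟩ := h i hPi
    simpa [hj] using Finset.single_le_sum (fun j _ => hterm i j) (Finset.mem_univ j)
  · exact Finset.sum_nonneg fun j _ => hterm i j

theorem Nat.le_ceil_div_mul (a : ℕ) {b : ℕ} (hb : 0 < b) : a ≤ ⌈(a / b : ℚ)⌉₊ * b := by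
  have := Nat.le_ceil (a / b : ℚ)
  rw [div_le_iff₀ (by exact_mod_cast hb)] at this
  exact_mod_cast this

theorem stmt_14_general {F : Type*} [Field F]
    {Sig Del : Type*}
    [AddCommGroup Sig] [Module F Sig] [FiniteDimensional F Sig]
    [DecidableEq Sig]
    [AddCommGroup Del] [Module F Del] [FiniteDimensional F Del]
    (hSig : 0 < Module.finrank F Sig) (hDel : 0 < Module.finrank F Del)
    {n q : ℕ} (hq : 0 < q)
    (C : Submodule F (Fin n → Sig))
    {I : Type*} [Fintype I]
    (p : I → ℝ) (hp0 : ∀ i, 0 ≤ p i) (hp1 : ∑ i, p i = 1)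
    (a : I → Fin q → Fin n) (T : I → (Fin q → Sig) → Bool)
    (hlin : ∀ i, ∃ W : Submodule F (Fin q → Sig), ∀ u, T i u = true ↔ u ∈ W)
    (hcomplete : ∀ w ∈ C, ∀ i, T i (fun j => w (a i j)) = true)
    (μ : ℝ)
    (hsound : ∀ w : Fin n → Sig,
      μ * ((⨅ c : C, hammingDist w (c : Fin n → Sig) : ℕ) : ℝ) / n ≤
        ∑ i with T i (fun j => w (a i j)) = false, p i) :
    ∃ (m : ℕ) (p' : I × Fin m → ℝ) (a' : I × Fin m → Fin q → Fin n)
      (T' : I × Fin m → (Fin q → Sig) → Bool),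
      m = Nat.ceil ((q * Module.finrank F Sig : ℚ) / (Module.finrank F Del : ℚ)) ∧
      (∀ i, 0 ≤ p' i) ∧ (∑ i, p' i = 1) ∧
      (∀ w ∈ C, ∀ i, T' i (fun j => w (a' i j)) = true) ∧
      (∀ i, ∃ W : Submodule F (Fin q → Sig), ∀ u, T' i u = true ↔ u ∈ W) ∧
      (∀ i, ∃ (g : Fin q → (Sig →ₗ[F] Del)) (G : (Fin q → Del) → Bool),
        ∀ u : Fin q → Sig, T' i u = G (fun j => g j (u j))) ∧
      (∀ w : Fin n → Sig,
        μ / m * ((⨅ c : C, hammingDist w (c : Fin n → Sig) : ℕ) : ℝ) / n ≤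
          ∑ i with T' i (fun j => w (a' i j)) = false, p' i) := by
  classical
  set m := ⌈(q * finrank F Sig : ℚ) / finrank F Del⌉₊
  have hm : (0 : ℝ) < m := by
    have : (0 : ℚ) < q * finrank F Sig / finrank F Del := by positivity
    exact Nat.cast_pos.mpr (Nat.ceil_pos.mpr this)
  have hdim : finrank F (Fin q → Sig) ≤ finrank F (Fin m → Del) := by
    simpa [Module.finrank_pi_fintype, mul_comm] using Nat.le_ceil_div_mul (q * finrank F Sig) hDel
  choose W hW using hlin
  choose ψ hψ using fun i =>
    (W i).exists_linearMap_ker_eq ((W i).finrank_quotient_le.trans hdim)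
  have reject_iff (i : I) (u : Fin q → Sig) : T i u = false ↔ ∃ j, ψ i u j ≠ 0 := by
    rw [← Bool.not_eq_true, hW, ← hψ i, LinearMap.mem_ker, ← ne_eq, Function.ne_iff]
    rfl
  refine ⟨m, fun ij => p ij.1 / m, fun ij => a ij.1, fun ij u => decide (ψ ij.1 u ij.2 = 0),
    rfl, fun ij => div_nonneg (hp0 ij.1) hm.le, ?_, ?_, ?_, ?_, ?_⟩
  · simp [Fintype.sum_prod_type, ← Finset.sum_div, ← Finset.mul_sum, hp1, hm.ne']
  · intro w hw ij
    have hψw : ∀ j, ψ ij.1 (fun j => w (a ij.1 j)) j = 0 := by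
      simpa using (reject_iff ij.1 _).not.mp (by simp [hcomplete w hw])
    simp [hψw]
  · exact fun ij => ⟨LinearMap.ker (LinearMap.proj ij.2 ∘ₗ ψ ij.1), by simp⟩
  · intro ij
    refine ⟨fun ℓ => (LinearMap.proj ij.2 ∘ₗ ψ ij.1) ∘ₗ LinearMap.single F (fun _ => Sig) ℓ,
      fun v => decide (∑ ℓ, v ℓ = 0), fun u => ?_⟩
    simp only [← LinearMap.apply_eq_sum_comp_single]
    rfl
  · intro w
    calc μ / m * ((⨅ c : C, hammingDist w (c : Fin n → Sig) : ℕ) : ℝ) / n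
        = (μ * ((⨅ c : C, hammingDist w (c : Fin n → Sig) : ℕ) : ℝ) / n) / m := by ring
      _ ≤ (∑ i with T i (fun j => w (a i j)) = false, p i) / m := by gcongr; exact hsound w
      _ ≤ (∑ ij : I × Fin m with ψ ij.1 (fun j => w (a ij.1 j)) ij.2 ≠ 0, p ij.1) / m := by
          gcongr
          exact Finset.sum_filter_le_sum_filter_prod p hp0 fun i => (reject_iff i _).mp
      _ = _ := by simp [Finset.sum_div]

/-- Reduction to a linearly separable tester (Theorem `TH:reduction_to_sep_lin`):
if the `F`-code `C ⊆ Sig^n` has an `F`-linear `q`-query tester of soundness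
`μ > 0` (each acceptance set is a linear subspace of `Sig^q`), and `Del` is a
nonzero finite-dimensional `F`-vector space, then `C` admits an `F`-linear
`q`-query tester which is linearly `Del`-separable (each predicate factors
through `F`-linear maps `g_j : Sig → Del`) and has soundness
`μ / ⌈q·dim Sig / dim Del⌉`. -/
theorem stmt_14 {F : Type*} [Field F] [Fintype F]
    {Sig Del : Type*}
    [AddCommGroup Sig] [Module F Sig] [FiniteDimensional F Sig]
    [Fintype Sig] [DecidableEq Sig]
    [AddCommGroup Del] [Module F Del] [FiniteDimensional F Del]
    (hSig : 0 < Module.finrank F Sig) (hDel : 0 < Module.finrank F Del)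
    {n q : ℕ} (hn : 0 < n) (hq : 0 < q)
    (C : Submodule F (Fin n → Sig))
    {I : Type*} [Fintype I]
    (p : I → ℝ) (hp0 : ∀ i, 0 ≤ p i) (hp1 : ∑ i, p i = 1)
    (a : I → Fin q → Fin n) (T : I → (Fin q → Sig) → Bool)
    (hlin : ∀ i, ∃ W : Submodule F (Fin q → Sig), ∀ u, T i u = true ↔ u ∈ W)
    (hcomplete : ∀ w ∈ C, ∀ i, T i (fun j => w (a i j)) = true)
    (μ : ℝ) (hμ : 0 < μ)
    (hsound : ∀ w : Fin n → Sig,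
      μ * ((⨅ c : C, hammingDist w (c : Fin n → Sig) : ℕ) : ℝ) / n ≤
        ∑ i with T i (fun j => w (a i j)) = false, p i) :
    ∃ (m : ℕ) (p' : I × Fin m → ℝ) (a' : I × Fin m → Fin q → Fin n)
      (T' : I × Fin m → (Fin q → Sig) → Bool),
      m = Nat.ceil ((q * Module.finrank F Sig : ℚ) / (Module.finrank F Del : ℚ)) ∧
      (∀ i, 0 ≤ p' i) ∧ (∑ i, p' i = 1) ∧
      (∀ w ∈ C, ∀ i, T' i (fun j => w (a' i j)) = true) ∧
      (∀ i, ∃ W : Submodule F (Fin q → Sig), ∀ u, T' i u = true ↔ u ∈ W) ∧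
      (∀ i, ∃ (g : Fin q → (Sig →ₗ[F] Del)) (G : (Fin q → Del) → Bool),
        ∀ u : Fin q → Sig, T' i u = G (fun j => g j (u j))) ∧
      (∀ w : Fin n → Sig,
        μ / m * ((⨅ c : C, hammingDist w (c : Fin n → Sig) : ℕ) : ℝ) / n ≤
          ∑ i with T' i (fun j => w (a' i j)) = false, p' i) :=
  stmt_14_general hSig hDel hq C p hp0 hp1 a T hlin hcomplete μ hsound
end
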